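/- Let S and T be finite (nonempty) semigroups and let n ≥ |S|·|T| + 4. Let f : (S×T)ⁿ → S×T be an operation such that for each 1 ≤ i < j ≤ n there is a word w_{ij} over X_n with f_{ij} = w_{ij}^{S×T}. Then there exist operations g : Sⁿ → S and h : Tⁿ → T such that f((a_1,b_1),…,(a_n,b_n)) = (g(a_1,…,a_n), h(b_1,…,b_n)) for all a_1,…,a_n ∈ S and b_1,…,b_n ∈ T, and moreover g_{ij} = w_{ij}^S and h_{ij} = w_{ij}^T for all 1 ≤ i < j ≤ n. -/

import Mathlib

/-! ### Words and word functions -/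

/-- The word `w^{(i j)}`: replace every occurrence of the letter `i` by `j`. -/
def subst {X : Type*} [DecidableEq X] (w : List X) (i j : X) : List X :=
  w.map fun t => if t = i then j else t

/-- The prefix `s(w)`: the longest prefix of `w` containing all but one of the
letters of `c(w)` (the empty word if `w` is empty). -/
def wordS {X : Type*} [DecidableEq X] (w : List X) : List X :=
  w.take (w.toFinset.sup fun x => w.idxOf x)

/-- The letter `σ(w)` (the last letter of `w` to occur from the left), as a word of
length at most one; `s(w) ++ σ(w)` is the shortest prefix of `w` with full content. -/
def wordSigma {X : Type*} [DecidableEq X] (w : List X) : List X :=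
  (w.drop (w.toFinset.sup fun x => w.idxOf x)).take 1

/-- The suffix `e(w)`, dual to `s(w)`. -/
def wordE {X : Type*} [DecidableEq X] (w : List X) : List X :=
  (wordS w.reverse).reverse

/-- The letter `ε(w)` (as a word of length at most one), dual to `σ(w)`. -/
def wordEps {X : Type*} [DecidableEq X] (w : List X) : List X :=
  (wordSigma w.reverse).reverse

/-- The initial part `i₂(w)`: retain only the first occurrence from the left of
each letter of `w`. -/
def initPart {X : Type*} [DecidableEq X] (w : List X) : List X :=
  w.reverse.dedup.reverse

/-- The dual `F̄` of a word function `F`: `F̄(w) = reverse (F (reverse w))`. -/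
def dualW {X : Type*} (F : List X → List X) (w : List X) : List X :=
  (F w.reverse).reverse

theorem wordS_length_lt {X : Type*} [DecidableEq X] {w : List X} (hw : w ≠ []) :
    (wordS w).length < w.length := by
  have hpos : 0 < w.length := List.length_pos_iff.mpr hw
  have hk : (w.toFinset.sup fun x => w.idxOf x) < w.length := by
    rw [Finset.sup_lt_iff hpos]
    intro x hx
    exact List.idxOf_lt_length_iff.mpr (List.mem_toFinset.mp hx)
  simp only [wordS, List.length_take]
  omega

/-- The common recursion defining the word functions `h_m` and `i_m` of Gerhard
and Petrich: `t_m(w) = t_m(s(w)) · σ(w) · t̄_{m-1}(w)` for `m ≥ 3`, where the base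
function (`h₂` = first letter, `i₂` = initial part) is a parameter, and all
functions send the empty word to the empty word. -/
def tW {X : Type*} [DecidableEq X] (base : List X → List X) : ℕ → List X → List X
  | m, w =>
    if hw : w = [] then []
    else if hm : m ≤ 2 then base w
    else tW base m (wordS w) ++ wordSigma w ++ (tW base (m - 1) w.reverse).reverse
termination_by m w => m + w.length
decreasing_by
  · have := wordS_length_lt hw; omega
  · (try simp [List.length_reverse] at *); omega

/-- The word function `h_m` (`m ≥ 2`): `h₂(w)` is the first letter of `w`, and
`h_m(w) = h_m(s(w)) · σ(w) · h̄_{m-1}(w)` for `m ≥ 3`. -/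
def hW {X : Type*} [DecidableEq X] : ℕ → List X → List X :=
  tW fun w => w.take 1

/-- The word function `i_m` (`m ≥ 2`): `i₂(w)` is the initial part of `w`, and
`i_m(w) = i_m(s(w)) · σ(w) · ī_{m-1}(w)` for `m ≥ 3`. -/
def iW {X : Type*} [DecidableEq X] : ℕ → List X → List X :=
  tW initPart

/-! ### Operations induced by words -/

/-- Evaluation of a word `w` over the alphabet `X` in a semigroup `S` under the
assignment `a : X → S`, computed in the monoid `WithOne S` (so that the empty word
evaluates to `1` and a nonempty word to the coercion of its value in `S`). -/
def evalW {X S : Type*} [Semigroup S] (a : X → S) (w : List X) : WithOne S :=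
  (w.map fun t => (a t : WithOne S)).prod

/-- The identification minor `f_{i j}` of an `n`-ary operation: the `i`-th argument
is replaced by the `j`-th. -/
def minor {α β : Type*} {n : ℕ} (f : (Fin n → α) → β) (i j : Fin n) :
    (Fin n → α) → β :=
  fun a => f (Function.update a i (a j))

/-- `f` depends on its `i`-th variable. -/
def DependsOnVar {α β : Type*} {n : ℕ} (f : (Fin n → α) → β) (i : Fin n) : Prop :=
  ∃ a b : Fin n → α, (∀ k : Fin n, k ≠ i → a k = b k) ∧ f a ≠ f b

/-- `f : Sⁿ → S` is induced by a (nonempty) word over `X_n = {x_1, …, x_n}`. -/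
def InducedByWord {S : Type*} [Semigroup S] {n : ℕ} (f : (Fin n → S) → S) : Prop :=
  ∃ w : List (Fin n), w ≠ [] ∧ ∀ a : Fin n → S, (f a : WithOne S) = evalW a w

lemma evalW_cons {X S : Type*} [Semigroup S] (a : X → S) (x : X) (w : List X) :
    evalW a (x :: w) = (a x : WithOne S) * evalW a w := by
  simp [evalW]

lemma evalW_fst_snd {X S T : Type*} [Semigroup S] [Semigroup T]
    (c : X → S × T) (w : List X) (hw : w ≠ []) :
    ∃ s t, evalW c w = ((s, t) : S × T) ∧
      evalW (fun k => (c k).1) w = (s : WithOne S) ∧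
      evalW (fun k => (c k).2) w = (t : WithOne T) := by
  induction w with
  | nil => exact absurd rfl hw
  | cons x w ih =>
    rcases eq_or_ne w [] with rfl | hw'
    · exact ⟨(c x).1, (c x).2, by simp [evalW], by simp [evalW], by simp [evalW]⟩
    · obtain ⟨s, t, h1, h2, h3⟩ := ih hw'
      refine ⟨(c x).1 * s, (c x).2 * t, ?_, ?_, ?_⟩
      · rw [evalW_cons, h1, ← WithOne.coe_mul, Prod.mk_mul_mk]
      · rw [evalW_cons, h2, ← WithOne.coe_mul]
      · rw [evalW_cons, h3, ← WithOne.coe_mul]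

/-- If `S, T` are finite nonempty semigroups, `n ≥ |S|·|T| + 4`,
and `f : (S×T)ⁿ → S×T` is an operation all of whose identification minors `f_{ij}`
are induced by words `w_{ij}` over `X_n`, then `f` decomposes as a pair of
operations `g : Sⁿ → S` and `h : Tⁿ → T` whose minors `g_{ij}`, `h_{ij}` are
induced by the same words `w_{ij}` on `S` and `T`, respectively. -/
theorem minors_induced_prod_decomposes
    {S T : Type*} [Semigroup S] [Semigroup T] [Fintype S] [Fintype T]
    [Nonempty S] [Nonempty T]
    (n : ℕ) (hn : Fintype.card S * Fintype.card T + 4 ≤ n)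
    (f : (Fin n → S × T) → S × T)
    (w : Fin n → Fin n → List (Fin n))
    (hw : ∀ i j : Fin n, i < j → (w i j) ≠ [] ∧
      ∀ c : Fin n → S × T, ((minor f i j c : S × T) : WithOne (S × T)) = evalW c (w i j)) :
    ∃ (g : (Fin n → S) → S) (h : (Fin n → T) → T),
      (∀ (a : Fin n → S) (b : Fin n → T),
        f (fun k => (a k, b k)) = (g a, h b)) ∧
      (∀ i j : Fin n, i < j →
        (∀ a : Fin n → S, ((minor g i j a : S) : WithOne S) = evalW a (w i j)) ∧
        (∀ b : Fin n → T, ((minor h i j b : T) : WithOne T) = evalW b (w i j))) := by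
  obtain ⟨t₀⟩ := ‹Nonempty T›
  obtain ⟨s₀⟩ := ‹Nonempty S›
  -- pigeonhole: any tuple over S × T has a repeated coordinate
  have pig : ∀ c : Fin n → S × T, ∃ i j : Fin n, i < j ∧ c i = c j := by
    intro c
    have hcard : Fintype.card (S × T) < Fintype.card (Fin n) := by
      rw [Fintype.card_fin, Fintype.card_prod]; omega
    obtain ⟨i, j, hne, heq⟩ := Fintype.exists_ne_map_eq_of_card_lt c hcard
    rcases lt_or_gt_of_ne hne with h | h
    · exact ⟨i, j, h, heq⟩
    · exact ⟨j, i, h, heq.symm⟩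
  -- key: if a,b both identify coordinates i and j, then f decomposes at (a,b) via w i j
  have keyA : ∀ (a : Fin n → S) (b : Fin n → T) (i j : Fin n), i < j →
      a i = a j → b i = b j →
      ((f (fun k => (a k, b k))).1 : WithOne S) = evalW a (w i j) ∧
      ((f (fun k => (a k, b k))).2 : WithOne T) = evalW b (w i j) := by
    intro a b i j hij ha hb
    set c : Fin n → S × T := fun k => (a k, b k) with hc
    have hcj : c j = c i := by simp [hc, ha, hb]
    have hupd : Function.update c i (c j) = c := by
      rw [hcj]; exact Function.update_eq_self i c
    have hmain := (hw i j hij).2 c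
    rw [minor, hupd] at hmain
    obtain ⟨s, t, h1, h2, h3⟩ := evalW_fst_snd c (w i j) (hw i j hij).1
    rw [h1] at hmain
    have hfc : f c = (s, t) := WithOne.coe_inj.mp hmain
    constructor
    · rw [hfc]; exact h2.symm
    · rw [hfc]; exact h3.symm
  refine ⟨fun a => (f (fun k => (a k, t₀))).1, fun b => (f (fun k => (s₀, b k))).2, ?_, ?_⟩
  · intro a b
    obtain ⟨i, j, hij, hc⟩ := pig (fun k => (a k, b k))
    have ha : a i = a j := congrArg Prod.fst hc
    have hb : b i = b j := congrArg Prod.snd hc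
    have h1 := (keyA a b i j hij ha hb).1
    have h2 := (keyA a b i j hij ha hb).2
    have hg := (keyA a (fun _ => t₀) i j hij ha rfl).1
    have hh := (keyA (fun _ => s₀) b i j hij rfl hb).2
    have e1 : (f (fun k => (a k, b k))).1 = (f (fun k => (a k, t₀))).1 :=
      WithOne.coe_inj.mp (h1.trans hg.symm)
    have e2 : (f (fun k => (a k, b k))).2 = (f (fun k => (s₀, b k))).2 :=
      WithOne.coe_inj.mp (h2.trans hh.symm)
    exact Prod.ext e1 e2
  · intro i j hij
    constructor
    · intro a
      set c : Fin n → S × T := fun k => (a k, t₀) with hcdef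
      have hupd : (fun k => ((Function.update a i (a j)) k, t₀)) =
          Function.update c i (c j) := by
        funext k
        by_cases hk : k = i <;> simp [hcdef, Function.update_apply, hk]
      have hmain := (hw i j hij).2 c
      obtain ⟨s, t, h1, h2, h3⟩ := evalW_fst_snd c (w i j) (hw i j hij).1
      rw [h1] at hmain
      have hfc : minor f i j c = (s, t) := WithOne.coe_inj.mp hmain
      show ((f (fun k => ((Function.update a i (a j)) k, t₀))).1 : WithOne S) = evalW a (w i j)
      rw [hupd]
      have : f (Function.update c i (c j)) = (s, t) := hfc
      rw [this]
      exact h2.symm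
    · intro b
      set c : Fin n → S × T := fun k => (s₀, b k) with hcdef
      have hupd : (fun k => (s₀, (Function.update b i (b j)) k)) =
          Function.update c i (c j) := by
        funext k
        by_cases hk : k = i <;> simp [hcdef, Function.update_apply, hk]
      have hmain := (hw i j hij).2 c
      obtain ⟨s, t, h1, h2, h3⟩ := evalW_fst_snd c (w i j) (hw i j hij).1
      rw [h1] at hmain
      have hfc : minor f i j c = (s, t) := WithOne.coe_inj.mp hmain
      show ((f (fun k => (s₀, (Function.update b i (b j)) k))).2 : WithOne T) = evalW b (w i j)
      rw [hupd]
      have : f (Function.update c i (c j)) = (s, t) := hfc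
      rw [this]
      exact h3.symm
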